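/- arXiv:1407.2512 — 6 statements merged into one kernel-verified Lean document; each statement's English description precedes it below -/
import Mathlib

section
/- (Generalized Feynman–Schwinger parametrization) Let n be a positive integer, x_1,…,x_n ∈ (0,∞), and let g : (0,∞) → (0,∞) be a measurable function with ∫_0^∞ g(r)/r dr = 1. Then 1/(x_1 ⋯ x_n) = ∫_0^∞ dt · t^{n−1} ∫_{(0,∞)^n} du · g(|u|₁) e^{−t (u·x)}. -/
/-!
Substituting `u = s / t` in the inner integral turns `t ^ (n - 1) du` into `t⁻¹ ds`. After
exchanging the integrals, the `t`-integral becomes `∫₀^∞ g(|s|₁ / t) dt / t`, which equals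
`∫₀^∞ g(r) dr / r = 1` because the measure `dt / t` is invariant under `t ↦ a / t`. What is left
is `∫_{(0,∞)ⁿ} e^{-s·x} ds = ∏ⱼ 1 / xⱼ`. The computation is done with `ℝ≥0∞`-valued integrals,
where Tonelli needs no integrability, and transferred to Bochner integrals at the end.
-/

open MeasureTheory Set Real Module

open scoped ENNReal

theorem sum_pos_of_mem_univ_pi_Ioi {ι : Type*} [Fintype ι] [Nonempty ι] {s : ι → ℝ}
    (hs : s ∈ univ.pi fun _ ↦ Ioi 0) : 0 < ∑ i, s i :=
  Finset.sum_pos (fun i _ ↦ hs i (mem_univ i)) Finset.univ_nonempty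

theorem lintegral_comp_inv_smul {E : Type*} [NormedAddCommGroup E] [NormedSpace ℝ E]
    [MeasurableSpace E] [BorelSpace E] [FiniteDimensional ℝ E] (μ : Measure E)
    [μ.IsAddHaarMeasure] (f : E → ℝ≥0∞) {R : ℝ} (hR : 0 < R) :
    ∫⁻ x, f (R⁻¹ • x) ∂μ = ENNReal.ofReal (R ^ finrank ℝ E) * ∫⁻ x, f x ∂μ := by
  have hmap : ∫⁻ y, f y ∂(μ.map (R⁻¹ • ·)) = ∫⁻ x, f (R⁻¹ • x) ∂μ :=
    lintegral_map_equiv f (Homeomorph.smulOfNeZero R⁻¹ (inv_ne_zero hR.ne')).toMeasurableEquiv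
  rw [← hmap, Measure.map_addHaar_smul μ (inv_ne_zero hR.ne'), lintegral_smul_measure, inv_pow,
    inv_inv, abs_of_pos (by positivity), smul_eq_mul]

theorem setLIntegral_univ_pi_Ioi_comp_inv_smul {ι : Type*} [Fintype ι] (f : (ι → ℝ) → ℝ≥0∞)
    {R : ℝ} (hR : 0 < R) :
    ∫⁻ x in univ.pi fun _ ↦ Ioi 0, f (R⁻¹ • x) =
      ENNReal.ofReal (R ^ Fintype.card ι) * ∫⁻ x in univ.pi fun _ ↦ Ioi 0, f x := by
  set S : Set (ι → ℝ) := univ.pi fun _ ↦ Ioi 0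
  have hS : MeasurableSet S := .univ_pi fun _ ↦ measurableSet_Ioi
  have hcone : (R⁻¹ • ·) ⁻¹' S = S := by
    ext x
    simp [S, hR]
  rw [← lintegral_indicator hS, ← lintegral_indicator hS, ← finrank_fintype_fun_eq_card ℝ,
    ← lintegral_comp_inv_smul volume _ hR]
  refine lintegral_congr fun x ↦ ?_
  nth_rw 1 [← hcone]
  exact indicator_comp_right (R⁻¹ • ·)

theorem integral_Ioi_exp_neg_mul {c : ℝ} (hc : 0 < c) : ∫ r in Ioi 0, exp (-c * r) = c⁻¹ := by
  rw [integral_exp_mul_Ioi (neg_neg_of_pos hc), mul_zero, exp_zero, neg_div_neg_eq, one_div]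

theorem setLIntegral_univ_pi_Ioi_exp_neg_dot {ι : Type*} [Fintype ι] {x : ι → ℝ}
    (hx : ∀ i, 0 < x i) :
    ∫⁻ s in univ.pi fun _ ↦ Ioi 0, ENNReal.ofReal (exp (-∑ i, s i * x i)) =
      ∏ i, ENNReal.ofReal (x i)⁻¹ := by
  have hprod : ∀ s : ι → ℝ, exp (-∑ i, s i * x i) = ∏ i, exp (-x i * s i) := fun s ↦ by
    rw [← exp_sum, ← Finset.sum_neg_distrib]
    exact congrArg exp (Finset.sum_congr rfl fun i _ ↦ by ring)
  have hint : ∀ i, Integrable (fun r ↦ exp (-x i * r)) (volume.restrict (Ioi 0)) := fun i ↦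
    exp_neg_integrableOn_Ioi 0 (hx i)
  simp_rw [hprod]
  rw [volume_pi, Measure.restrict_pi_pi, ← ofReal_integral_eq_lintegral_ofReal
    (Integrable.fintype_prod hint) (.of_forall fun s ↦ by positivity),
    integral_fintype_prod_eq_prod (fun i r ↦ exp (-x i * r)),
    ENNReal.ofReal_prod_of_nonneg fun i _ ↦ integral_nonneg fun r ↦ (exp_pos _).le]
  simp_rw [integral_Ioi_exp_neg_mul (hx _)]

theorem setLIntegral_Ioi_ofReal_inv_mul_comp_div {a : ℝ} (ha : 0 < a) (f : ℝ → ℝ≥0∞) :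
    ∫⁻ t in Ioi 0, ENNReal.ofReal t⁻¹ * f (a / t) = ∫⁻ r in Ioi 0, ENNReal.ofReal r⁻¹ * f r := by
  have hmaps : (a / ·) '' Ioi 0 = Ioi 0 := by
    ext r
    refine ⟨?_, fun hr ↦ ⟨a / r, div_pos ha hr, div_div_cancel₀ ha.ne'⟩⟩
    rintro ⟨t, ht, rfl⟩
    exact div_pos ha ht
  have hderiv : ∀ t ∈ Ioi (0 : ℝ), HasDerivWithinAt (a / ·) (a * -(t ^ 2)⁻¹) (Ioi 0) t :=
    fun t ht ↦ ((hasDerivAt_inv (ne_of_gt ht)).const_mul a).hasDerivWithinAt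
  have hinj : InjOn (a / ·) (Ioi (0 : ℝ)) := fun t₁ _ t₂ _ (h : a / t₁ = a / t₂) ↦ by
    rwa [div_eq_mul_inv, div_eq_mul_inv, mul_right_inj' ha.ne', inv_inj] at h
  conv_rhs =>
    rw [← hmaps, lintegral_image_eq_lintegral_abs_deriv_mul measurableSet_Ioi hderiv hinj]
  refine setLIntegral_congr_fun measurableSet_Ioi fun t (ht : 0 < t) ↦ ?_
  rw [← mul_assoc, ← ENNReal.ofReal_mul (abs_nonneg _), mul_neg, abs_neg,
    abs_of_pos (by positivity)]
  congr 2
  field_simp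

theorem setLIntegral_Ioi_ofReal_inv_mul_ofReal {g : ℝ → ℝ} (hg : ∀ r, 0 < r → 0 ≤ g r)
    (hint : IntegrableOn (fun r ↦ g r / r) (Ioi 0)) :
    ∫⁻ r in Ioi 0, ENNReal.ofReal r⁻¹ * ENNReal.ofReal (g r) =
      ENNReal.ofReal (∫ r in Ioi 0, g r / r) := by
  rw [ofReal_integral_eq_lintegral_ofReal hint ((ae_restrict_iff' measurableSet_Ioi).2
    (.of_forall fun r (hr : 0 < r) ↦ div_nonneg (hg r hr) hr.le))]
  refine setLIntegral_congr_fun measurableSet_Ioi fun r (hr : 0 < r) ↦ ?_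
  rw [div_eq_inv_mul, ENNReal.ofReal_mul (inv_nonneg.2 hr.le)]

theorem lintegral_feynman_schwinger {ι : Type*} [Fintype ι] [Nonempty ι] {x : ι → ℝ}
    (hx : ∀ i, 0 < x i) {G : ℝ → ℝ≥0∞} (hG : Measurable G) :
    ∫⁻ t in Ioi 0, ENNReal.ofReal (t ^ (Fintype.card ι - 1)) *
        ∫⁻ u in univ.pi fun _ ↦ Ioi 0, G (∑ i, u i) * ENNReal.ofReal (exp (-(t * ∑ i, u i * x i)))
      = (∫⁻ r in Ioi 0, ENNReal.ofReal r⁻¹ * G r) * ∏ i, ENNReal.ofReal (x i)⁻¹ := by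
  set S : Set (ι → ℝ) := univ.pi fun _ ↦ Ioi 0
  have hS : MeasurableSet S := .univ_pi fun _ ↦ measurableSet_Ioi
  set E : (ι → ℝ) → ℝ≥0∞ := fun s ↦ ENNReal.ofReal (exp (-∑ i, s i * x i))
  have hrescale : ∀ t ∈ Ioi (0 : ℝ), ENNReal.ofReal (t ^ (Fintype.card ι - 1)) *
        ∫⁻ u in S, G (∑ i, u i) * ENNReal.ofReal (exp (-(t * ∑ i, u i * x i))) =
      ENNReal.ofReal t⁻¹ * ∫⁻ s in S, G ((∑ i, s i) / t) * E s := by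
    intro t (ht : 0 < t)
    have hpow : t ^ (Fintype.card ι - 1) = t⁻¹ * t ^ Fintype.card ι := by
      rw [← Nat.sub_add_cancel Fintype.card_pos, pow_succ', inv_mul_cancel_left₀ ht.ne',
        Nat.add_sub_cancel]
    rw [hpow, ENNReal.ofReal_mul (inv_nonneg.2 ht.le), mul_assoc,
      ← setLIntegral_univ_pi_Ioi_comp_inv_smul _ ht]
    refine congrArg _ (lintegral_congr fun s ↦ ?_)
    have hsum : ∑ i, (t⁻¹ • s) i = (∑ i, s i) / t := by
      simp only [Pi.smul_apply, smul_eq_mul, inv_mul_eq_div, Finset.sum_div]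
    have hdot : t * ∑ i, (t⁻¹ • s) i * x i = ∑ i, s i * x i := by
      simp only [Pi.smul_apply, smul_eq_mul, Finset.mul_sum, mul_assoc, mul_inv_cancel_left₀ ht.ne']
    rw [hsum, hdot]
  have hswap : ∫⁻ t in Ioi 0, ENNReal.ofReal t⁻¹ * ∫⁻ s in S, G ((∑ i, s i) / t) * E s =
      ∫⁻ s in S, ∫⁻ t in Ioi 0, ENNReal.ofReal t⁻¹ * (G ((∑ i, s i) / t) * E s) := by
    simp_rw [← lintegral_const_mul' _ _ ENNReal.ofReal_ne_top]
    exact lintegral_lintegral_swap (by fun_prop)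
  have hinner : ∀ s ∈ S, ∫⁻ t in Ioi 0, ENNReal.ofReal t⁻¹ * (G ((∑ i, s i) / t) * E s) =
      (∫⁻ r in Ioi 0, ENNReal.ofReal r⁻¹ * G r) * E s := by
    intro s hs
    simp_rw [← mul_assoc]
    rw [lintegral_mul_const' _ _ ENNReal.ofReal_ne_top,
      setLIntegral_Ioi_ofReal_inv_mul_comp_div (sum_pos_of_mem_univ_pi_Ioi hs)]
  rw [setLIntegral_congr_fun measurableSet_Ioi hrescale, hswap, setLIntegral_congr_fun hS hinner,
    lintegral_const_mul _ (by fun_prop), setLIntegral_univ_pi_Ioi_exp_neg_dot hx]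

theorem integral_feynman_schwinger {ι : Type*} [Fintype ι] [Nonempty ι] {x : ι → ℝ}
    (hx : ∀ i, 0 < x i) {g : ℝ → ℝ} (hgmeas : Measurable g) (hg : ∀ r, 0 < r → 0 ≤ g r)
    (hint : IntegrableOn (fun r ↦ g r / r) (Ioi 0)) :
    ∫ t in Ioi 0, t ^ (Fintype.card ι - 1) *
        ∫ u in univ.pi fun _ ↦ Ioi 0, g (∑ i, u i) * exp (-(t * ∑ i, u i * x i))
      = (∫ r in Ioi 0, g r / r) * ∏ i, (x i)⁻¹ := by
  set S : Set (ι → ℝ) := univ.pi fun _ ↦ Ioi 0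
  have hS : MeasurableSet S := .univ_pi fun _ ↦ measurableSet_Ioi
  have hg_sum : ∀ u ∈ S, 0 ≤ g (∑ i, u i) := fun u hu ↦ hg _ (sum_pos_of_mem_univ_pi_Ioi hu)
  set Φ : ℝ → ℝ≥0∞ := fun t ↦ ENNReal.ofReal (t ^ (Fintype.card ι - 1)) *
    ∫⁻ u in S, ENNReal.ofReal (g (∑ i, u i)) * ENNReal.ofReal (exp (-(t * ∑ i, u i * x i)))
  have hΦ : Measurable Φ := by
    fun_prop (disch := exact Measurable.lintegral_prod_right (by fun_prop))
  have hΦ_lintegral : ∫⁻ t in Ioi 0, Φ t =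
      ENNReal.ofReal (∫ r in Ioi 0, g r / r) * ∏ i, ENNReal.ofReal (x i)⁻¹ := by
    rw [lintegral_feynman_schwinger hx hgmeas.ennreal_ofReal,
      setLIntegral_Ioi_ofReal_inv_mul_ofReal hg hint]
  have hinner : ∀ t : ℝ, ∫ u in S, g (∑ i, u i) * exp (-(t * ∑ i, u i * x i)) =
      (∫⁻ u in S, ENNReal.ofReal (g (∑ i, u i)) *
        ENNReal.ofReal (exp (-(t * ∑ i, u i * x i)))).toReal := fun t ↦ by
    rw [integral_eq_lintegral_of_nonneg_ae ((ae_restrict_iff' hS).2 (.of_forall fun u hu ↦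
      mul_nonneg (hg_sum u hu) (exp_pos _).le)) (by fun_prop)]
    exact congrArg _ (setLIntegral_congr_fun hS fun u hu ↦ ENNReal.ofReal_mul (hg_sum u hu))
  have hΦ_ne_top : ∫⁻ t in Ioi 0, Φ t ≠ ∞ := hΦ_lintegral ▸
    ENNReal.mul_ne_top ENNReal.ofReal_ne_top (ENNReal.prod_ne_top fun _ _ ↦ ENNReal.ofReal_ne_top)
  calc _ = ∫ t in Ioi 0, (Φ t).toReal := by
        refine setIntegral_congr_fun measurableSet_Ioi fun t (ht : 0 < t) ↦ ?_
        rw [hinner, ENNReal.toReal_mul, ENNReal.toReal_ofReal (pow_nonneg ht.le _)]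
    _ = (∫⁻ t in Ioi 0, Φ t).toReal := integral_toReal hΦ.aemeasurable (ae_lt_top hΦ hΦ_ne_top)
    _ = _ := by
        rw [hΦ_lintegral, ENNReal.toReal_mul, ENNReal.toReal_ofReal (setIntegral_nonneg
          measurableSet_Ioi fun r (hr : 0 < r) ↦ div_nonneg (hg r hr) hr.le), ENNReal.toReal_prod]
        simp only [ENNReal.toReal_ofReal (inv_nonneg.2 (hx _).le)]

/-- Generalized Feynman–Schwinger parametrization. For `x_1, …, x_n > 0` and a
measurable `g : (0,∞) → (0,∞)` with `∫_0^∞ g(r)/r dr = 1`,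
`1/(x_1 ⋯ x_n) = ∫_0^∞ dt tⁿ⁻¹ ∫_{(0,∞)ⁿ} du g(|u|₁) e^{−t u·x}`. -/
theorem statement3 (n : ℕ) (hn : 0 < n) (x : Fin n → ℝ) (hx : ∀ j, 0 < x j)
    (g : ℝ → ℝ) (hgmeas : Measurable g) (hgpos : ∀ r : ℝ, 0 < r → 0 < g r)
    (hgnorm : ∫ r in Set.Ioi (0 : ℝ), g r / r = 1) :
    1 / ∏ j, x j =
      ∫ t in Set.Ioi (0 : ℝ),
        t ^ (n - 1) *
          ∫ u in Set.univ.pi fun _ : Fin n => Set.Ioi (0 : ℝ),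
            g (∑ j, u j) * Real.exp (-(t * ∑ j, u j * x j)) := by
  have : Nonempty (Fin n) := Fin.pos_iff_nonempty.mp hn
  have h := integral_feynman_schwinger hx hgmeas (fun r hr ↦ (hgpos r hr).le)
    (Integrable.of_integral_ne_zero (hgnorm ▸ one_ne_zero))
  rw [Fintype.card_fin, hgnorm, one_mul, Finset.prod_inv_distrib, ← one_div] at h
  exact h.symm
end

section
/- Let μ be a locally finite Borel measure on ℝ. Then for Lebesgue-almost every x₀ ∈ ℝ the following holds: for every c₀ > 0 there is a constant C = C(x₀, c₀, μ) < ∞ such that for all real numbers 0 < ε < δ < c₀ and all t > 0 one has (i) ∫_{[x₀, x₀+δ]} e^{−t(x−x₀)} dμ(x) ≤ C (1 − e^{−tδ})/t, and (ii) ∫_{[x₀+ε, x₀+δ]} e^{−t(x−x₀)} dμ(x) ≤ C e^{−tε/2} (1 − e^{−tδ/2})/(t/2) ≤ C e^{−tε/2}/(t/2). The exceptional null set of points x₀ does not depend on c₀, ε or δ. -/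
/-!
By the Besicovitch differentiation theorem, for Lebesgue-a.e. `x₀` the ratio
`μ [x₀ - r, x₀ + r] / 2r` stays bounded as `r → 0⁺`, and local finiteness extends this to a bound
`μ [x₀, x₀ + r] ≤ K r` for all `0 < r ≤ c₀`. The level sets of `x ↦ e^{-t(x - x₀)}` on
`[x₀, x₀ + δ]` are initial segments, so each has `μ`-mass at most `K` times its length; the
layer-cake formula then gives `∫ e^{-t(x - x₀)} dμ ≤ K ∫_{x₀}^{x₀+δ} e^{-t(x - x₀)} dx
= K (1 - e^{-tδ}) / t`. Bound (ii) is bound (i) at `t / 2`, since `e^{-tu} ≤ e^{-tε/2} e^{-tu/2}`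
for `u ≥ ε`.
-/

open MeasureTheory Set Filter Topology

lemma integral_exp_neg_mul_sub (a δ : ℝ) {t : ℝ} (ht : t ≠ 0) :
    ∫ x in a..a + δ, Real.exp (-(t * (x - a))) = (1 - Real.exp (-(t * δ))) / t := by
  have hderiv (x : ℝ) : HasDerivAt (fun x => Real.exp (-(t * (x - a))) / (-t))
      (Real.exp (-(t * (x - a)))) x := by
    have hlin : HasDerivAt (fun x => -(t * (x - a))) (-t) x := by
      simpa [neg_mul] using ((hasDerivAt_id x).sub_const a).const_mul (-t)
    exact (hlin.exp.div_const (-t)).congr_deriv (by field_simp)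
  rw [intervalIntegral.integral_eq_sub_of_hasDerivAt (fun x _ => hderiv x)
    ((by fun_prop : Continuous _).intervalIntegrable _ _)]
  simp only [sub_self, mul_zero, neg_zero, Real.exp_zero, add_sub_cancel_left]
  field_simp
  ring

lemma setOf_lt_exp_neg_mul_sub {a t s : ℝ} (ht : 0 < t) (hs : 0 < s) :
    {x | s < Real.exp (-(t * (x - a)))} = Iio (a - Real.log s / t) := by
  ext x
  rw [mem_ofPred_eq, mem_Iio, ← Real.log_lt_iff_lt_exp hs, lt_sub_iff_add_lt,
    ← lt_sub_iff_add_lt', div_lt_iff₀ ht]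
  constructor <;> intro h <;> linarith

section

variable {μ : Measure ℝ} {a δ K : ℝ}

lemma measure_Iio_inter_Icc_le (hδ : 0 < δ)
    (hμ : ∀ r ∈ Ioc 0 δ, μ (Icc a (a + r)) ≤ ENNReal.ofReal (K * r)) (c : ℝ) :
    μ (Iio c ∩ Icc a (a + δ)) ≤ ENNReal.ofReal K * volume (Iio c ∩ Icc a (a + δ)) := by
  rcases le_or_gt c a with hca | hac
  · have hempty : Iio c ∩ Icc a (a + δ) = ∅ :=
      eq_empty_of_forall_notMem fun x hx => (hx.1.trans_le hca).not_ge hx.2.1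
    simp [hempty]
  set r := min (c - a) δ
  have hr : r ∈ Ioc 0 δ := ⟨lt_min (sub_pos.2 hac) hδ, min_le_right _ _⟩
  have hrc : r ≤ c - a := min_le_left _ _
  calc μ (Iio c ∩ Icc a (a + δ)) ≤ μ (Icc a (a + r)) := by
        refine measure_mono fun x ⟨hxc, hxa, hxδ⟩ => ⟨hxa, ?_⟩
        have : x - a ≤ r := le_min (by linarith [mem_Iio.1 hxc]) (by linarith)
        linarith
    _ ≤ ENNReal.ofReal K * ENNReal.ofReal r := by
        rw [← ENNReal.ofReal_mul' hr.1.le]; exact hμ r hr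
    _ = ENNReal.ofReal K * volume (Ico a (a + r)) := by rw [Real.volume_Ico, add_sub_cancel_left]
    _ ≤ ENNReal.ofReal K * volume (Iio c ∩ Icc a (a + δ)) := by
        gcongr
        exact fun x ⟨hxa, hxr⟩ => ⟨mem_Iio.2 (by linarith), hxa, by linarith [hr.2]⟩

lemma setLIntegral_exp_neg_mul_sub_le (hδ : 0 < δ)
    (hμ : ∀ r ∈ Ioc 0 δ, μ (Icc a (a + r)) ≤ ENNReal.ofReal (K * r)) {t : ℝ} (ht : 0 < t) :
    ∫⁻ x in Icc a (a + δ), ENNReal.ofReal (Real.exp (-(t * (x - a)))) ∂μ ≤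
      ENNReal.ofReal K * ∫⁻ x in Icc a (a + δ), ENNReal.ofReal (Real.exp (-(t * (x - a)))) := by
  have hpos : ∀ ν : Measure ℝ, 0 ≤ᵐ[ν] fun x => Real.exp (-(t * (x - a))) :=
    fun ν => ae_of_all _ fun x => (Real.exp_pos _).le
  have hmeas : Measurable fun x => Real.exp (-(t * (x - a))) := by fun_prop
  rw [lintegral_eq_lintegral_meas_lt _ (hpos _) hmeas.aemeasurable,
    lintegral_eq_lintegral_meas_lt _ (hpos _) hmeas.aemeasurable,
    ← lintegral_const_mul' _ _ ENNReal.ofReal_ne_top]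
  refine setLIntegral_mono' measurableSet_Ioi fun s (hs : 0 < s) => ?_
  rw [setOf_lt_exp_neg_mul_sub ht hs, Measure.restrict_apply measurableSet_Iio,
    Measure.restrict_apply measurableSet_Iio]
  exact measure_Iio_inter_Icc_le hδ hμ _

lemma setIntegral_exp_neg_mul_sub_le (hK : 0 ≤ K) (hδ : 0 < δ)
    (hμ : ∀ r ∈ Ioc 0 δ, μ (Icc a (a + r)) ≤ ENNReal.ofReal (K * r)) {t : ℝ} (ht : 0 < t) :
    ∫ x in Icc a (a + δ), Real.exp (-(t * (x - a))) ∂μ ≤ K * ((1 - Real.exp (-(t * δ))) / t) := by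
  have hpos : ∀ ν : Measure ℝ, 0 ≤ᵐ[ν] fun x => Real.exp (-(t * (x - a))) :=
    fun ν => ae_of_all _ fun x => (Real.exp_pos _).le
  have hcont : Continuous fun x => Real.exp (-(t * (x - a))) := by fun_prop
  have hvol : ∫⁻ x in Icc a (a + δ), ENNReal.ofReal (Real.exp (-(t * (x - a)))) =
      ENNReal.ofReal ((1 - Real.exp (-(t * δ))) / t) := by
    rw [← ofReal_integral_eq_lintegral_ofReal hcont.integrableOn_Icc (hpos _),
      integral_Icc_eq_integral_Ioc, ← intervalIntegral.integral_of_le (by linarith),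
      integral_exp_neg_mul_sub a δ ht.ne']
  rw [integral_eq_lintegral_of_nonneg_ae (hpos _) hcont.aestronglyMeasurable]
  refine ENNReal.toReal_le_of_le_ofReal (mul_nonneg hK (div_nonneg (sub_nonneg.2
    (Real.exp_le_one_iff.2 (neg_nonpos.2 (mul_pos ht hδ).le))) ht.le)) ?_
  rw [ENNReal.ofReal_mul hK, ← hvol]
  exact setLIntegral_exp_neg_mul_sub_le hδ hμ ht

lemma setIntegral_exp_neg_mul_sub_Icc_add_le [IsLocallyFiniteMeasure μ] (hK : 0 ≤ K) (hδ : 0 < δ)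
    (hμ : ∀ r ∈ Ioc 0 δ, μ (Icc a (a + r)) ≤ ENNReal.ofReal (K * r)) {ε t : ℝ} (hε : 0 ≤ ε)
    (ht : 0 < t) :
    ∫ x in Icc (a + ε) (a + δ), Real.exp (-(t * (x - a))) ∂μ ≤
      K * Real.exp (-(t * ε / 2)) * ((1 - Real.exp (-(t * δ / 2))) / (t / 2)) := by
  have hsub : Icc (a + ε) (a + δ) ⊆ Icc a (a + δ) := Icc_subset_Icc (by linarith) le_rfl
  have hint : IntegrableOn (fun x => Real.exp (-(t * ε / 2)) * Real.exp (-(t / 2 * (x - a))))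
      (Icc a (a + δ)) μ := (by fun_prop : Continuous _).integrableOn_Icc
  calc ∫ x in Icc (a + ε) (a + δ), Real.exp (-(t * (x - a))) ∂μ
      ≤ ∫ x in Icc (a + ε) (a + δ), Real.exp (-(t * ε / 2)) * Real.exp (-(t / 2 * (x - a))) ∂μ := by
        refine setIntegral_mono_on (by fun_prop : Continuous _).integrableOn_Icc
          (hint.mono_set hsub) measurableSet_Icc fun x hx => ?_
        rw [← Real.exp_add, Real.exp_le_exp]
        nlinarith [hx.1]
    _ ≤ ∫ x in Icc a (a + δ), Real.exp (-(t * ε / 2)) * Real.exp (-(t / 2 * (x - a))) ∂μ :=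
        setIntegral_mono_set hint (ae_of_all _ fun x => by positivity) hsub.eventuallyLE
    _ = Real.exp (-(t * ε / 2)) * ∫ x in Icc a (a + δ), Real.exp (-(t / 2 * (x - a))) ∂μ :=
        integral_const_mul _ _
    _ ≤ Real.exp (-(t * ε / 2)) * (K * ((1 - Real.exp (-(t / 2 * δ))) / (t / 2))) := by
        gcongr
        exact setIntegral_exp_neg_mul_sub_le hK hδ hμ (half_pos ht)
    _ = K * Real.exp (-(t * ε / 2)) * ((1 - Real.exp (-(t * δ / 2))) / (t / 2)) := by
        rw [div_mul_eq_mul_div, mul_comm t]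
        ring

end

lemma ae_eventually_measure_Icc_le (μ : Measure ℝ) [IsLocallyFiniteMeasure μ] :
    ∀ᵐ x, ∃ K : ℝ, ∀ᶠ r in 𝓝[>] 0, μ (Icc x (x + r)) ≤ ENNReal.ofReal (K * r) := by
  filter_upwards [Besicovitch.ae_tendsto_rnDeriv μ volume, μ.rnDeriv_lt_top volume]
    with x hlim hfin
  set L := μ.rnDeriv volume x
  have hL : L + 1 ≠ ⊤ := ENNReal.add_ne_top.2 ⟨hfin.ne, ENNReal.one_ne_top⟩
  refine ⟨(L + 1).toReal * 2, ?_⟩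
  filter_upwards [hlim.eventually_lt_const (ENNReal.lt_add_right hfin.ne one_ne_zero),
    self_mem_nhdsWithin] with r hr (hr0 : 0 < r)
  rw [Real.volume_closedBall, ENNReal.div_lt_iff (Or.inl (by simp [hr0]))
    (Or.inl ENNReal.ofReal_ne_top)] at hr
  calc μ (Icc x (x + r)) ≤ μ (Metric.closedBall x r) := by
        rw [Real.closedBall_eq_Icc]
        exact measure_mono (Icc_subset_Icc (by linarith) le_rfl)
    _ ≤ (L + 1) * ENNReal.ofReal (2 * r) := hr.le
    _ = ENNReal.ofReal ((L + 1).toReal * 2 * r) := by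
        rw [mul_assoc, ENNReal.ofReal_mul ENNReal.toReal_nonneg, ENNReal.ofReal_toReal hL]

lemma exists_measure_Icc_le_of_eventually (μ : Measure ℝ) [IsLocallyFiniteMeasure μ] {x K : ℝ}
    (h : ∀ᶠ r in 𝓝[>] 0, μ (Icc x (x + r)) ≤ ENNReal.ofReal (K * r)) (R : ℝ) :
    ∃ K' : ℝ, 0 ≤ K' ∧ ∀ r ∈ Ioc 0 R, μ (Icc x (x + r)) ≤ ENNReal.ofReal (K' * r) := by
  obtain ⟨r₀, hr₀ : 0 < r₀, hsmall⟩ := mem_nhdsGT_iff_exists_Ioc_subset.1 h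
  set B := (μ (Icc x (x + R))).toReal
  have hB : 0 ≤ B / r₀ := div_nonneg ENNReal.toReal_nonneg hr₀.le
  refine ⟨max K (B / r₀), le_max_of_le_right hB, fun r hr => ?_⟩
  rcases le_or_gt r r₀ with hrr₀ | hr₀r
  · exact (hsmall ⟨hr.1, hrr₀⟩).trans
      (ENNReal.ofReal_le_ofReal (mul_le_mul_of_nonneg_right (le_max_left _ _) hr.1.le))
  · calc μ (Icc x (x + r)) ≤ μ (Icc x (x + R)) :=
          measure_mono (Icc_subset_Icc le_rfl (by linarith [hr.2]))
      _ = ENNReal.ofReal (B / r₀ * r₀) := by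
          rw [div_mul_cancel₀ _ hr₀.ne', ENNReal.ofReal_toReal measure_Icc_lt_top.ne]
      _ ≤ ENNReal.ofReal (max K (B / r₀) * r) :=
          ENNReal.ofReal_le_ofReal (mul_le_mul (le_max_right _ _) hr₀r.le hr₀.le
            (le_max_of_le_right hB))

/-- For a locally finite Borel measure `μ` on `ℝ`, for Lebesgue-a.e. `x₀` the
following holds: for every `c₀ > 0` there is `C < ∞` such that for all `0 < ε < δ < c₀` and all
`t > 0`, (i) `∫_{[x₀,x₀+δ]} e^{−t(x−x₀)} dμ ≤ C(1−e^{−tδ})/t` and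
(ii) `∫_{[x₀+ε,x₀+δ]} e^{−t(x−x₀)} dμ ≤ C e^{−tε/2}(1−e^{−tδ/2})/(t/2) ≤ C e^{−tε/2}/(t/2)`. -/
theorem statement4 (μ : Measure ℝ) [IsLocallyFiniteMeasure μ] :
    ∀ᵐ x₀ : ℝ ∂(volume : Measure ℝ), ∀ c₀ : ℝ, 0 < c₀ → ∃ C : ℝ,
      ∀ ε δ t : ℝ, 0 < ε → ε < δ → δ < c₀ → 0 < t →
        (∫ x in Set.Icc x₀ (x₀ + δ), Real.exp (-(t * (x - x₀))) ∂μ ≤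
            C * ((1 - Real.exp (-(t * δ))) / t)) ∧
        (∫ x in Set.Icc (x₀ + ε) (x₀ + δ), Real.exp (-(t * (x - x₀))) ∂μ ≤
            C * Real.exp (-(t * ε / 2)) * ((1 - Real.exp (-(t * δ / 2))) / (t / 2))) ∧
        (C * Real.exp (-(t * ε / 2)) * ((1 - Real.exp (-(t * δ / 2))) / (t / 2)) ≤
            C * Real.exp (-(t * ε / 2)) / (t / 2)) := by
  filter_upwards [ae_eventually_measure_Icc_le μ] with x₀ ⟨K, hK⟩
  intro c₀ _
  obtain ⟨C, hC, hμ⟩ := exists_measure_Icc_le_of_eventually μ hK c₀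
  refine ⟨C, fun ε δ t hε hεδ hδc₀ ht => ?_⟩
  have hδ : 0 < δ := hε.trans hεδ
  have hμδ : ∀ r ∈ Ioc 0 δ, μ (Icc x₀ (x₀ + r)) ≤ ENNReal.ofReal (C * r) :=
    fun r hr => hμ r ⟨hr.1, hr.2.trans hδc₀.le⟩
  refine ⟨setIntegral_exp_neg_mul_sub_le hC hδ hμδ ht,
    setIntegral_exp_neg_mul_sub_Icc_add_le hC hδ hμδ hε.le ht, ?_⟩
  calc C * Real.exp (-(t * ε / 2)) * ((1 - Real.exp (-(t * δ / 2))) / (t / 2))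
      ≤ C * Real.exp (-(t * ε / 2)) * (1 / (t / 2)) := by
        gcongr
        exact sub_le_self _ (Real.exp_pos _).le
    _ = C * Real.exp (-(t * ε / 2)) / (t / 2) := by rw [mul_one_div]
end

section
/- Let f : ℝ → ℝ (or ℂ) be locally integrable and suppose the limit ℓ := lim_{t→∞} f(t) exists. Then lim_{s↓0} ( −1/ln s ) ∫_1^∞ t^{−1} e^{−st} f(t) dt = ℓ. -/
/-!
The weight `t⁻¹ e^{-st}` has mass `∫_1^∞ t⁻¹ e^{-st} dt = -log s + O(1)` as `s ↓ 0`: on `(1, 1/s]`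
it lies between `t⁻¹ - s` and `t⁻¹`, and beyond `1/s` it is dominated by `s e^{-st}`, of mass `e⁻¹`.
As this mass tends to infinity, the weighted integral of `f - ℓ` is `o(-log s)`: its part over a
fixed `(1, A]` stays bounded, and beyond `A` the function `f - ℓ` is uniformly small.
-/

open MeasureTheory Filter Set Real Topology

lemma integrableOn_inv_mul_exp_neg_mul_Ioi {s a : ℝ} (hs : 0 < s) (ha : 0 < a) :
    IntegrableOn (fun t => t⁻¹ * exp (-(s * t))) (Ioi a) := by
  refine ((exp_neg_integrableOn_Ioi a hs).const_mul a⁻¹).mono' (by fun_prop) ?_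
  filter_upwards [ae_restrict_mem measurableSet_Ioi] with t (ht : a < t)
  rw [norm_mul, norm_inv, Real.norm_of_nonneg (ha.trans ht).le, Real.norm_of_nonneg (exp_pos _).le,
    neg_mul]
  gcongr

lemma integral_inv_mul_exp_neg_mul_Ioi_inv_le {s : ℝ} (hs : 0 < s) :
    ∫ t in Ioi s⁻¹, t⁻¹ * exp (-(s * t)) ≤ 1 :=
  calc ∫ t in Ioi s⁻¹, t⁻¹ * exp (-(s * t))
      ≤ ∫ t in Ioi s⁻¹, s * exp (-s * t) := by
        refine setIntegral_mono_on (integrableOn_inv_mul_exp_neg_mul_Ioi hs (inv_pos.2 hs))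
          ((exp_neg_integrableOn_Ioi _ hs).const_mul s) measurableSet_Ioi fun t ht => ?_
        rw [neg_mul]
        gcongr
        exact inv_le_of_inv_le₀ hs (le_of_lt ht)
    _ = exp (-1) := by
        rw [integral_const_mul, integral_exp_mul_Ioi (neg_neg_of_pos hs)]
        field_simp
    _ ≤ 1 := exp_le_one_iff.2 (by norm_num)

lemma intervalIntegral_inv_mul_exp_neg_mul_mem {s : ℝ} (hs : 0 < s) (hs1 : s ≤ 1) :
    ∫ t in (1 : ℝ)..s⁻¹, t⁻¹ * exp (-(s * t)) ∈ Icc (-log s - 1) (-log s) := by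
  have hs1' : 1 ≤ s⁻¹ := (one_le_inv₀ hs).2 hs1
  have hinv : IntervalIntegrable (fun t : ℝ => t⁻¹) volume 1 s⁻¹ := by
    simp [intervalIntegrable_inv_iff, uIcc_of_le hs1']
  have hw : IntervalIntegrable (fun t => t⁻¹ * exp (-(s * t))) volume 1 s⁻¹ :=
    (intervalIntegrable_iff_integrableOn_Ioc_of_le hs1').2
      ((integrableOn_inv_mul_exp_neg_mul_Ioi hs one_pos).mono_set Ioc_subset_Ioi_self)
  have hlog : ∫ t in (1 : ℝ)..s⁻¹, t⁻¹ = -log s := by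
    rw [integral_inv_of_pos one_pos (inv_pos.2 hs), div_one, log_inv]
  constructor
  · calc -log s - 1 ≤ ∫ t in (1 : ℝ)..s⁻¹, (t⁻¹ - s) := by
          rw [intervalIntegral.integral_sub hinv intervalIntegrable_const, hlog,
            intervalIntegral.integral_const, smul_eq_mul]
          field_simp
          linarith
      _ ≤ ∫ t in (1 : ℝ)..s⁻¹, t⁻¹ * exp (-(s * t)) := by
          refine intervalIntegral.integral_mono_on hs1' (hinv.sub intervalIntegrable_const) hw
            fun t ht => ?_
          have ht0 : 0 < t := one_pos.trans_le ht.1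
          calc t⁻¹ - s = t⁻¹ * (-(s * t) + 1) := by field_simp; ring
            _ ≤ t⁻¹ * exp (-(s * t)) := by gcongr; exact add_one_le_exp _
  · calc ∫ t in (1 : ℝ)..s⁻¹, t⁻¹ * exp (-(s * t)) ≤ ∫ t in (1 : ℝ)..s⁻¹, t⁻¹ := by
          refine intervalIntegral.integral_mono_on hs1' hw hinv fun t ht => ?_
          have ht0 : 0 < t := one_pos.trans_le ht.1
          exact mul_le_of_le_one_right (inv_pos.2 ht0).le (exp_le_one_iff.2 (by nlinarith))
      _ = -log s := hlog

lemma abs_integral_inv_mul_exp_neg_mul_add_log_le {s : ℝ} (hs : 0 < s) (hs1 : s ≤ 1) :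
    |(∫ t in Ioi 1, t⁻¹ * exp (-(s * t))) + log s| ≤ 1 := by
  rw [← intervalIntegral.integral_interval_add_Ioi (integrableOn_inv_mul_exp_neg_mul_Ioi hs one_pos)
    (integrableOn_inv_mul_exp_neg_mul_Ioi hs (inv_pos.2 hs))]
  have hhead := intervalIntegral_inv_mul_exp_neg_mul_mem hs hs1
  have htail := integral_inv_mul_exp_neg_mul_Ioi_inv_le hs
  have htail0 : 0 ≤ ∫ t in Ioi s⁻¹, t⁻¹ * exp (-(s * t)) :=
    setIntegral_nonneg measurableSet_Ioi fun t (ht : s⁻¹ < t) =>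
      mul_nonneg (inv_nonneg.2 ((inv_pos.2 hs).trans ht).le) (exp_pos _).le
  rw [abs_le]
  constructor <;> linarith [hhead.1, hhead.2]

lemma tendsto_neg_log_inv_nhdsGT_zero : Tendsto (fun s => (-log s)⁻¹) (𝓝[>] 0) (𝓝 0) :=
  tendsto_inv_atTop_zero.comp (tendsto_neg_atBot_atTop.comp tendsto_log_nhdsGT_zero)

lemma tendsto_neg_log_inv_mul_integral_inv_mul_exp_neg_mul :
    Tendsto (fun s => (-log s)⁻¹ * ∫ t in Ioi 1, t⁻¹ * exp (-(s * t))) (𝓝[>] 0) (𝓝 1) := by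
  rw [tendsto_iff_norm_sub_tendsto_zero]
  refine squeeze_zero_norm' ?_ tendsto_neg_log_inv_nhdsGT_zero
  filter_upwards [Ioo_mem_nhdsGT one_pos] with s ⟨hs, hs1⟩
  set W := ∫ t in Ioi 1, t⁻¹ * exp (-(s * t))
  have hL : 0 < -log s := neg_pos.2 (log_neg hs hs1)
  calc ‖‖(-log s)⁻¹ * W - 1‖‖ = (-log s)⁻¹ * |W + log s| := by
        have hlog : log s ≠ 0 := (log_neg hs hs1).ne
        rw [norm_norm, Real.norm_eq_abs,
          show (-log s)⁻¹ * W - 1 = (-log s)⁻¹ * (W + log s) by field_simp; ring, abs_mul,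
          abs_of_pos (inv_pos.2 hL)]
    _ ≤ (-log s)⁻¹ := by
        simpa using mul_le_mul_of_nonneg_left
          (abs_integral_inv_mul_exp_neg_mul_add_log_le hs hs1.le) (inv_pos.2 hL).le

lemma MeasureTheory.LocallyIntegrable.integrable_indicator_Ioc_norm {E : Type*}
    [NormedAddCommGroup E] {g : ℝ → E} (hg : LocallyIntegrable g) (a b : ℝ) :
    Integrable ((Ioc a b).indicator fun t => ‖g t‖) :=
  (integrable_indicator_iff measurableSet_Ioc).2
    ((hg.integrableOn_isCompact isCompact_Icc).mono_set Ioc_subset_Icc_self).norm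

variable {E : Type*} [NormedAddCommGroup E] [NormedSpace ℝ E]

lemma norm_inv_mul_exp_neg_mul_smul_le {g : ℝ → E} {s A c t : ℝ} (hs : 0 ≤ s)
    (hc : ∀ t, A < t → ‖g t‖ ≤ c) (ht : 1 < t) :
    ‖(t⁻¹ * exp (-(s * t))) • g t‖ ≤
      (Ioc 1 A).indicator (fun t => ‖g t‖) t + c * (t⁻¹ * exp (-(s * t))) := by
  have ht0 : 0 < t := one_pos.trans ht
  have hw0 : 0 ≤ t⁻¹ * exp (-(s * t)) := by positivity
  rw [norm_smul, Real.norm_of_nonneg hw0]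
  rcases le_or_gt t A with htA | hAt
  · have hw1 : t⁻¹ * exp (-(s * t)) ≤ 1 :=
      mul_le_one₀ (inv_le_one_of_one_le₀ ht.le) (exp_pos _).le
        (exp_le_one_iff.2 (neg_nonpos.2 (by positivity)))
    have hc0 : 0 ≤ c := (norm_nonneg _).trans (hc (A + 1) (lt_add_one A))
    rw [indicator_of_mem (show t ∈ Ioc 1 A from ⟨ht, htA⟩)]
    nlinarith [norm_nonneg (g t)]
  · rw [indicator_of_notMem fun h => hAt.not_ge h.2, zero_add, mul_comm c]
    exact mul_le_mul_of_nonneg_left (hc t hAt) hw0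

lemma norm_integral_inv_mul_exp_neg_mul_smul_le {g : ℝ → E} (hg : LocallyIntegrable g)
    {s A c : ℝ} (hs : 0 < s) (hc : ∀ t, A < t → ‖g t‖ ≤ c) :
    ‖∫ t in Ioi 1, (t⁻¹ * exp (-(s * t))) • g t‖ ≤
      (∫ t in Ioc 1 A, ‖g t‖) + c * ∫ t in Ioi 1, t⁻¹ * exp (-(s * t)) := by
  have hind : IntegrableOn ((Ioc 1 A).indicator fun t => ‖g t‖) (Ioi 1) :=
    (hg.integrable_indicator_Ioc_norm 1 A).integrableOn
  calc ‖∫ t in Ioi 1, (t⁻¹ * exp (-(s * t))) • g t‖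
      ≤ ∫ t in Ioi 1, ((Ioc 1 A).indicator (fun t => ‖g t‖) t + c * (t⁻¹ * exp (-(s * t)))) := by
        refine norm_integral_le_of_norm_le
          (hind.add ((integrableOn_inv_mul_exp_neg_mul_Ioi hs one_pos).const_mul c)) ?_
        filter_upwards [ae_restrict_mem measurableSet_Ioi] with t ht
        exact norm_inv_mul_exp_neg_mul_smul_le hs.le hc ht
    _ = (∫ t in Ioc 1 A, ‖g t‖) + c * ∫ t in Ioi 1, t⁻¹ * exp (-(s * t)) := by
        rw [integral_add hind ((integrableOn_inv_mul_exp_neg_mul_Ioi hs one_pos).const_mul c),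
          setIntegral_indicator measurableSet_Ioc, inter_eq_right.2 Ioc_subset_Ioi_self,
          integral_const_mul]

lemma integrableOn_inv_mul_exp_neg_mul_smul {g : ℝ → E} (hg : LocallyIntegrable g)
    (hbdd : IsBoundedUnder (· ≤ ·) atTop fun t => ‖g t‖) {s : ℝ} (hs : 0 < s) :
    IntegrableOn (fun t => (t⁻¹ * exp (-(s * t))) • g t) (Ioi 1) := by
  obtain ⟨c, hc⟩ := hbdd
  obtain ⟨A, hA⟩ := eventually_atTop.1 (eventually_map.1 hc)
  refine ((hg.integrable_indicator_Ioc_norm 1 A).integrableOn.add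
    ((integrableOn_inv_mul_exp_neg_mul_Ioi hs one_pos).const_mul c)).mono'
    ((by fun_prop : Measurable fun t : ℝ => t⁻¹ * exp (-(s * t))).aestronglyMeasurable.smul
      hg.aestronglyMeasurable).restrict ?_
  filter_upwards [ae_restrict_mem measurableSet_Ioi] with t ht
  exact norm_inv_mul_exp_neg_mul_smul_le hs.le (fun t ht => hA t ht.le) ht

theorem tendsto_neg_log_inv_smul_integral_inv_mul_exp_neg_mul_smul {g : ℝ → E}
    (hg : LocallyIntegrable g) (hlim : Tendsto g atTop (𝓝 0)) :
    Tendsto (fun s => (-log s)⁻¹ • ∫ t in Ioi 1, (t⁻¹ * exp (-(s * t))) • g t) (𝓝[>] 0) (𝓝 0) := by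
  rw [Metric.tendsto_nhds]
  intro ε hε
  obtain ⟨A, hA⟩ := eventually_atTop.1 ((tendsto_zero_iff_norm_tendsto_zero.1 hlim).eventually
    (ge_mem_nhds (half_pos hε)))
  set M := ∫ t in Ioc 1 A, ‖g t‖
  have hbound : Tendsto (fun s => (-log s)⁻¹ * M +
      ε / 2 * ((-log s)⁻¹ * ∫ t in Ioi 1, t⁻¹ * exp (-(s * t)))) (𝓝[>] 0) (𝓝 (0 * M + ε / 2 * 1)) :=
    (tendsto_neg_log_inv_nhdsGT_zero.mul_const M).add
      (tendsto_neg_log_inv_mul_integral_inv_mul_exp_neg_mul.const_mul _)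
  filter_upwards [hbound.eventually (gt_mem_nhds (show 0 * M + ε / 2 * 1 < ε by linarith)),
    Ioo_mem_nhdsGT one_pos] with s hs ⟨hs0, hs1⟩
  have hL : 0 < (-log s)⁻¹ := inv_pos.2 (neg_pos.2 (log_neg hs0 hs1))
  rw [dist_zero_right, norm_smul, Real.norm_of_nonneg hL.le]
  calc (-log s)⁻¹ * ‖∫ t in Ioi 1, (t⁻¹ * exp (-(s * t))) • g t‖
      ≤ (-log s)⁻¹ * (M + ε / 2 * ∫ t in Ioi 1, t⁻¹ * exp (-(s * t))) :=
        mul_le_mul_of_nonneg_left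
          (norm_integral_inv_mul_exp_neg_mul_smul_le hg hs0 fun t ht => hA t ht.le) hL.le
    _ < ε := by linarith

/-- final-value-type theorem. If `f : ℝ → ℝ` is locally integrable and
`f(t) → ℓ` as `t → ∞`, then `(−1/ln s) ∫_1^∞ t⁻¹ e^{−st} f(t) dt → ℓ` as `s ↓ 0`. -/
theorem statement5 (f : ℝ → ℝ) (hf : LocallyIntegrable f (volume : Measure ℝ)) (ℓ : ℝ)
    (hlim : Tendsto f atTop (nhds ℓ)) :
    Tendsto
      (fun s : ℝ => (-1 / Real.log s) * ∫ t in Set.Ioi (1 : ℝ), t⁻¹ * Real.exp (-(s * t)) * f t)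
      (nhdsWithin 0 (Set.Ioi 0)) (nhds ℓ) := by
  have hg : LocallyIntegrable (fun t => f t - ℓ) := hf.sub (locallyIntegrable_const ℓ)
  have hg0 : Tendsto (fun t => f t - ℓ) atTop (𝓝 0) := by
    simpa using hlim.sub_const ℓ
  have hsplit : ∀ᶠ s in 𝓝[>] 0,
      ℓ * ((-log s)⁻¹ * ∫ t in Ioi 1, t⁻¹ * exp (-(s * t))) +
        (-log s)⁻¹ • ∫ t in Ioi 1, (t⁻¹ * exp (-(s * t))) • (f t - ℓ) =
      (-1 / log s) * ∫ t in Ioi 1, t⁻¹ * exp (-(s * t)) * f t := by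
    filter_upwards [self_mem_nhdsWithin] with s (hs : 0 < s)
    have hint := integrableOn_inv_mul_exp_neg_mul_smul hg hg0.norm.isBoundedUnder_le hs
    have hw := (integrableOn_inv_mul_exp_neg_mul_Ioi hs one_pos).const_mul ℓ
    rw [smul_eq_mul, mul_left_comm ℓ, ← mul_add, ← integral_const_mul, ← integral_add hw hint,
      neg_div, one_div, ← inv_neg]
    congr 2 with t
    rw [smul_eq_mul]
    ring
  simpa using ((tendsto_neg_log_inv_mul_integral_inv_mul_exp_neg_mul.const_mul ℓ).add
    (tendsto_neg_log_inv_smul_integral_inv_mul_exp_neg_mul_smul hg hg0)).congr' hsplit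
end

section
/- For every integer n ≥ 2, with the cyclic convention u_{n+1} := u_1, one has ∫_{(0,∞)^n} du · |u|₁ e^{−|u|₁} / ∏_{j=1}^n (u_j + u_{j+1}) = (n/2) · ∫_{(0,∞)^n} du · e^{−|u|₁} / ∏_{j=1}^{n−1} (u_j + u_{j+1}). -/
/-!
Since `∑ⱼ (u j + u (j + 1)) = 2 |u|₁`, the left integrand is `½ ∑ₖ` of the integrand in which the
bond `u k + u (k + 1)` is dropped from the cyclic product. Rotating the coordinates carries the
bond `k` to any other bond and preserves both Lebesgue measure and the orthant, so all `n` terms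
have the same integral as the one without the bond `(n, 1)`, which is the right-hand side.
Working with lower Lebesgue integrals makes this valid without any integrability argument.
-/

open MeasureTheory Finset
open scoped ENNReal

theorem setLIntegral_univ_pi_comp_perm {ι α : Type*} [Fintype ι] [MeasureSpace α]
    [SigmaFinite (volume : Measure α)] (σ : Equiv.Perm ι) (s : Set α) (g : (ι → α) → ℝ≥0∞) :
    ∫⁻ u in Set.univ.pi (fun _ => s), g (u ∘ σ) = ∫⁻ u in Set.univ.pi (fun _ => s), g u := by
  set e := MeasurableEquiv.arrowCongr' σ.symm (MeasurableEquiv.refl α)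
  have hpre : e ⁻¹' Set.univ.pi (fun _ => s) = Set.univ.pi (fun _ => s) := by
    ext u
    change (∀ i ∈ Set.univ, u (σ i) ∈ s) ↔ ∀ i ∈ Set.univ, u i ∈ s
    exact ⟨fun h i _ => by simpa using h (σ.symm i) trivial, fun h i _ => h (σ i) trivial⟩
  have h := (volume_preserving_arrowCongr' σ.symm _ (.id _)).setLIntegral_comp_preimage_emb
    e.measurableEmbedding g (Set.univ.pi fun _ => s)
  rwa [hpre] at h

theorem setIntegral_eq_toReal_setLIntegral_ofReal {α : Type*} [MeasurableSpace α] {μ : Measure α}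
    {s : Set α} (hs : MeasurableSet s) {f : α → ℝ} (hf : Measurable f) (hf0 : ∀ x ∈ s, 0 ≤ f x) :
    ∫ x in s, f x ∂μ = (∫⁻ x in s, ENNReal.ofReal (f x) ∂μ).toReal :=
  integral_eq_lintegral_of_nonneg_ae ((ae_restrict_iff' hs).2 (ae_of_all _ hf0))
    hf.aestronglyMeasurable

namespace CyclicChain

abbrev orthant (n : ℕ) : Set (Fin n → ℝ) := Set.univ.pi fun _ => Set.Ioi 0

theorem measurableSet_orthant (n : ℕ) : MeasurableSet (orthant n) :=
  .univ_pi fun _ => measurableSet_Ioi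

variable {n : ℕ} [NeZero n]

noncomputable def cycleIntegrand (u : Fin n → ℝ) : ℝ :=
  (∑ j, u j) * Real.exp (-∑ j, u j) / ∏ j, (u j + u (j + 1))

/-- The integrand of the open chain obtained by cutting the cycle at the bond `(k, k + 1)`. -/
noncomputable def cutIntegrand (k : Fin n) (u : Fin n → ℝ) : ℝ :=
  Real.exp (-∑ j, u j) / ∏ j ∈ univ.erase k, (u j + u (j + 1))

theorem measurable_cycleIntegrand : Measurable (cycleIntegrand (n := n)) := by
  unfold cycleIntegrand
  fun_prop

theorem measurable_cutIntegrand (k : Fin n) : Measurable (cutIntegrand k) := by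
  unfold cutIntegrand
  fun_prop

theorem cutIntegrand_nonneg (k : Fin n) {u : Fin n → ℝ} (hu : ∀ j, 0 < u j) :
    0 ≤ cutIntegrand k u :=
  div_nonneg (Real.exp_pos _).le (prod_nonneg fun j _ => (add_pos (hu j) (hu (j + 1))).le)

theorem cutIntegrand_comp_addRight (k m : Fin n) (u : Fin n → ℝ) :
    cutIntegrand k (u ∘ Equiv.addRight m) = cutIntegrand (k + m) u := by
  simp only [cutIntegrand, Function.comp_apply, Equiv.coe_addRight]
  rw [Fintype.sum_equiv (Equiv.addRight m) (fun j => u (j + m)) u fun _ => rfl]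
  congr 1
  refine prod_equiv (Equiv.addRight m) (fun j => by simp) (fun j _ => ?_)
  simp only [Equiv.coe_addRight, add_right_comm]

theorem sum_cutIntegrand {u : Fin n → ℝ} (hu : ∀ j, 0 < u j) :
    ∑ k, 2⁻¹ * cutIntegrand k u = cycleIntegrand u := by
  have hbond : ∀ k, cutIntegrand k u =
      (u k + u (k + 1)) * Real.exp (-∑ j, u j) / ∏ j, (u j + u (j + 1)) := fun k => by
    rw [cutIntegrand, ← mul_prod_erase univ _ (mem_univ k),
      mul_div_mul_left _ _ (add_pos (hu k) (hu (k + 1))).ne']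
  have hcycle : ∑ k : Fin n, (u k + u (k + 1)) = 2 * ∑ j, u j := by
    rw [sum_add_distrib, Fintype.sum_equiv (Equiv.addRight (1 : Fin n)) (fun j => u (j + 1)) u
      fun _ => rfl]
    ring
  simp only [cycleIntegrand, hbond, ← mul_sum, ← sum_div, ← sum_mul, hcycle]
  ring

theorem cycleIntegrand_nonneg {u : Fin n → ℝ} (hu : ∀ j, 0 < u j) : 0 ≤ cycleIntegrand u := by
  rw [← sum_cutIntegrand hu]
  exact sum_nonneg fun k _ => mul_nonneg (by norm_num) (cutIntegrand_nonneg k hu)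

theorem setLIntegral_cutIntegrand_eq (k k' : Fin n) :
    ∫⁻ u in orthant n, ENNReal.ofReal (cutIntegrand k u) =
      ∫⁻ u in orthant n, ENNReal.ofReal (cutIntegrand k' u) := by
  simpa only [cutIntegrand_comp_addRight, add_sub_cancel] using
    (setLIntegral_univ_pi_comp_perm (Equiv.addRight (k' - k)) (Set.Ioi (0 : ℝ))
      fun u => ENNReal.ofReal (cutIntegrand k u)).symm

theorem setLIntegral_cycleIntegrand (k : Fin n) :
    ∫⁻ u in orthant n, ENNReal.ofReal (cycleIntegrand u) =
      ENNReal.ofReal (n / 2) * ∫⁻ u in orthant n, ENNReal.ofReal (cutIntegrand k u) := by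
  calc _ = ∫⁻ u in orthant n, ∑ k', ENNReal.ofReal 2⁻¹ * ENNReal.ofReal (cutIntegrand k' u) := by
        refine setLIntegral_congr_fun (measurableSet_orthant n) fun u hu => ?_
        have hu : ∀ j, 0 < u j := fun j => hu j trivial
        rw [← sum_cutIntegrand hu, ENNReal.ofReal_sum_of_nonneg fun k' _ =>
          mul_nonneg (by norm_num) (cutIntegrand_nonneg k' hu)]
        simp only [ENNReal.ofReal_mul (inv_nonneg.2 zero_le_two)]
    _ = ∑ _k' : Fin n,
          ENNReal.ofReal 2⁻¹ * ∫⁻ u in orthant n, ENNReal.ofReal (cutIntegrand k u) := by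
        rw [lintegral_finsetSum _ fun k' _ =>
          (measurable_cutIntegrand k').ennreal_ofReal.const_mul _]
        simp only [lintegral_const_mul _ (measurable_cutIntegrand _).ennreal_ofReal,
          setLIntegral_cutIntegrand_eq _ k]
    _ = _ := by
        rw [sum_const, card_univ, Fintype.card_fin, nsmul_eq_mul, ← mul_assoc, div_eq_mul_inv,
          ENNReal.ofReal_mul n.cast_nonneg, ENNReal.ofReal_natCast]

theorem setIntegral_cycleIntegrand (k : Fin n) :
    ∫ u in orthant n, cycleIntegrand u = (n / 2) * ∫ u in orthant n, cutIntegrand k u := by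
  rw [setIntegral_eq_toReal_setLIntegral_ofReal (measurableSet_orthant n)
      measurable_cycleIntegrand fun u hu => cycleIntegrand_nonneg fun j => hu j trivial,
    setIntegral_eq_toReal_setLIntegral_ofReal (measurableSet_orthant n) (measurable_cutIntegrand k)
      fun u hu => cutIntegrand_nonneg k fun j => hu j trivial,
    setLIntegral_cycleIntegrand k, ENNReal.toReal_mul, ENNReal.toReal_ofReal (by positivity)]

end CyclicChain

open CyclicChain in
theorem statement7_general (n : ℕ) [NeZero n] :
    (∫ u in Set.univ.pi fun _ : Fin n => Set.Ioi (0 : ℝ),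
        (∑ j, u j) * Real.exp (-∑ j, u j) / ∏ j, (u j + u (j + 1))) =
      ((n : ℝ) / 2) *
        ∫ u in Set.univ.pi fun _ : Fin n => Set.Ioi (0 : ℝ),
          Real.exp (-∑ j, u j) /
            ∏ j ∈ Finset.univ.filter (fun j : Fin n => (j : ℕ) + 1 < n), (u j + u (j + 1)) := by
  obtain ⟨k, hk⟩ : ∃ k : Fin n, univ.filter (fun j : Fin n => (j : ℕ) + 1 < n) = univ.erase k :=
    ⟨⟨n - 1, Nat.sub_one_lt (NeZero.ne n)⟩, by ext j; simp [Fin.ext_iff]; omega⟩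
  rw [hk]
  exact setIntegral_cycleIntegrand k

/-- For every `n ≥ 2`, with the cyclic convention `u_{n+1} := u_1`,
`∫_{(0,∞)ⁿ} du |u|₁ e^{−|u|₁} / ∏_{j=1}^n (u_j + u_{j+1})
  = (n/2) ∫_{(0,∞)ⁿ} du e^{−|u|₁} / ∏_{j=1}^{n−1} (u_j + u_{j+1})`. -/
theorem statement7 (n : ℕ) [NeZero n] (hn : 2 ≤ n) :
    (∫ u in Set.univ.pi fun _ : Fin n => Set.Ioi (0 : ℝ),
        (∑ j, u j) * Real.exp (-∑ j, u j) / ∏ j, (u j + u (j + 1))) =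
      ((n : ℝ) / 2) *
        ∫ u in Set.univ.pi fun _ : Fin n => Set.Ioi (0 : ℝ),
          Real.exp (-∑ j, u j) /
            ∏ j ∈ Finset.univ.filter (fun j : Fin n => (j : ℕ) + 1 < n), (u j + u (j + 1)) :=
  statement7_general n
end

section
/- Let d ≥ 1 be an integer and let V : ℝ^d → [0,∞) be a bounded measurable function with compact support such that the set {x ∈ ℝ^d : V(x) ≠ 0} has positive Lebesgue measure. Then the family of functions { x ↦ √V(x) · e^{i ξ·x} : ξ ∈ ℝ^d }, regarded as elements of L²(ℝ^d), is linearly independent: for every finite nonempty set M ⊆ ℝ^d and nonzero coefficients c_ξ ∈ ℂ (ξ ∈ M), the function x ↦ √V(x) Σ_{ξ∈M} c_ξ e^{iξ·x} is not the zero element of L²(ℝ^d). -/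
/-!
If `√V · f` vanished a.e., the exponential polynomial `f x = ∑ c_ξ e^{iξ·x}` would vanish on
`{V ≠ 0}`, a set of positive measure. Pick `v` with `ξ ↦ ξ·v` injective on `M`; by Fubini some
line `x₀ + ℝv` meets the zero set of `f` in positive length. On that line `f` is the exponential
polynomial `t ↦ ∑ c_ξ e^{iξ·x₀} e^{i(ξ·v)t}` with distinct frequencies. It is real-analytic, so
it vanishes identically, and Dedekind's independence of characters forces every coefficient
`c_ξ e^{iξ·x₀}` to be zero.
-/

open MeasureTheory Set Complex Matrix

theorem AnalyticOnNhd.eq_zero_of_measure_setOf_eq_zero_pos {E : Type*} [NormedAddCommGroup E]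
    [NormedSpace ℝ E] {μ : Measure ℝ} [NullSingletonClass μ] {g : ℝ → E}
    (hg : AnalyticOnNhd ℝ g univ) (h : 0 < μ {t | g t = 0}) : g = 0 := by
  obtain ⟨t₀, ht₀⟩ := exists_accPt_of_nullSingletonClass h
  exact funext fun t ↦ hg.eqOn_zero_of_preconnected_of_frequently_eq_zero isPreconnected_univ
    (mem_univ t₀) (accPt_iff_frequently_nhdsNE.1 ht₀) (mem_univ t)

noncomputable def expIChar (r : ℝ) : AddChar ℝ ℂ where
  toFun t := cexp (I * (r * t))
  map_zero_eq_one' := by simp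
  map_add_eq_mul' s t := by rw [← Complex.exp_add]; push_cast; ring_nf

theorem expIChar_apply (r t : ℝ) : expIChar r t = cexp (I * (r * t)) := rfl

theorem expIChar_injective : Function.Injective expIChar := by
  intro r r' h
  by_contra hne
  set t := Real.pi / (r - r')
  have hrt : (r - r') * t = Real.pi := mul_div_cancel₀ _ (sub_ne_zero.2 hne)
  have : cexp (Real.pi * I) = 1 :=
    calc cexp (Real.pi * I) = expIChar r t / expIChar r' t := by
          rw [expIChar_apply, expIChar_apply, ← Complex.exp_sub, ← hrt]; push_cast; ring_nf
      _ = 1 := by rw [h, expIChar_apply, div_self (Complex.exp_ne_zero _)]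
  norm_num [Complex.exp_pi_mul_I] at this

theorem linearIndependent_expIChar : LinearIndependent ℂ (fun r ↦ ⇑(expIChar r)) :=
  (linearIndependent_monoidHom (Multiplicative ℝ) ℂ).comp
    (fun r ↦ (expIChar r).toMonoidHom) (AddChar.toMonoidHomEquiv.injective.comp expIChar_injective)

theorem analyticOnNhd_expIChar (r : ℝ) : AnalyticOnNhd ℝ (expIChar r) univ :=
  fun t _ ↦ analyticAt_cexp.restrictScalars.comp
    (analyticAt_const.mul (analyticAt_const.mul (ofRealCLM.analyticAt t)))

theorem eq_zero_of_measure_setOf_sum_expIChar_eq_zero_pos {ι : Type*} {μ : Measure ℝ}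
    [NullSingletonClass μ] {s : Finset ι} {a : ι → ℝ} (ha : Set.InjOn a s) {b : ι → ℂ}
    (h : 0 < μ {t | ∑ j ∈ s, b j * expIChar (a j) t = 0}) : ∀ j ∈ s, b j = 0 := by
  have hg : AnalyticOnNhd ℝ (fun t ↦ ∑ j ∈ s, b j * expIChar (a j) t) univ :=
    fun t _ ↦ Finset.analyticAt_fun_sum _ fun j _ ↦
      analyticAt_const.mul (analyticOnNhd_expIChar (a j) t (mem_univ t))
  have hsum := hg.eq_zero_of_measure_setOf_eq_zero_pos h
  have hli : LinearIndepOn ℂ (fun j ↦ ⇑(expIChar (a j))) (s : Set ι) :=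
    (linearIndependent_expIChar.linearIndepOn _).comp_of_image ha
  refine linearIndepOn_finset_iff.1 hli b ?_
  ext t
  simpa using congrFun hsum t

theorem exists_injOn_dotProduct {n K : Type*} [Fintype n] [Field K] [Infinite K]
    {s : Set (n → K)} (hs : s.Finite) : ∃ v : n → K, s.InjOn (· ⬝ᵥ v) := by
  classical
  have : Finite s := hs.to_subtype
  obtain ⟨f, hf⟩ := Module.exists_dual_forall_apply_ne_zero (K := K)
    (fun p : {p : s × s // p.1 ≠ p.2} ↦ (p.1.1 : n → K) - p.1.2)
    fun p ↦ sub_ne_zero.2 (Subtype.coe_injective.ne p.2)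
  refine ⟨(dotProductEquiv K n).symm f, fun ξ hξ η hη hξη ↦ by_contra fun hne ↦
    hf ⟨(⟨ξ, hξ⟩, ⟨η, hη⟩), fun h ↦ hne (congrArg Subtype.val h)⟩ ?_⟩
  rw [← (dotProductEquiv K n).apply_symm_apply f, dotProductEquiv_apply_apply, dotProduct_comm,
    sub_dotProduct]
  exact sub_eq_zero.2 hξη

theorem exists_measure_setOf_add_smul_mem_ne_zero {E : Type*} [NormedAddCommGroup E]
    [NormedSpace ℝ E] [MeasurableSpace E] [BorelSpace E] [SecondCountableTopology E]
    (μ : Measure E) [SFinite μ] [μ.IsAddRightInvariant] {Z : Set E} (hZ : MeasurableSet Z)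
    (hZpos : μ Z ≠ 0) (v : E) : ∃ x, volume {t : ℝ | x + t • v ∈ Z} ≠ 0 := by
  by_contra! hcon
  set A : Set (E × ℝ) := {p | p.1 + p.2 • v ∈ Z}
  have hA : MeasurableSet A := measurable_fst.add (measurable_snd.smul_const v) hZ
  have hsection_x : ∀ x : E, volume (Prod.mk x ⁻¹' A) = 0 := hcon
  have hsection_t (t : ℝ) : μ ((·, t) ⁻¹' A) = μ Z := measure_preimage_add_right μ (t • v) Z
  have := Measure.prod_apply hA (μ := μ) (ν := volume)
  rw [Measure.prod_apply_symm hA, lintegral_congr hsection_t, lintegral_congr hsection_x] at this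
  simp [hZpos] at this

theorem eq_zero_of_measure_setOf_sum_exp_dotProduct_eq_zero_pos {n : Type*} [Fintype n]
    {M : Finset (n → ℝ)} {c : (n → ℝ) → ℂ}
    (h : 0 < volume {x : n → ℝ | ∑ ξ ∈ M, c ξ * cexp (I * ↑(ξ ⬝ᵥ x)) = 0}) :
    ∀ ξ ∈ M, c ξ = 0 := by
  set f : (n → ℝ) → ℂ := fun x ↦ ∑ ξ ∈ M, c ξ * cexp (I * ↑(ξ ⬝ᵥ x))
  have hZ : MeasurableSet {x | f x = 0} :=
    (isClosed_eq (by fun_prop) continuous_const).measurableSet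
  obtain ⟨v, hv⟩ := exists_injOn_dotProduct M.finite_toSet
  obtain ⟨x₀, hx₀⟩ := exists_measure_setOf_add_smul_mem_ne_zero volume hZ h.ne' v
  have hline (t : ℝ) : f (x₀ + t • v) =
      ∑ ξ ∈ M, (c ξ * cexp (I * ↑(ξ ⬝ᵥ x₀))) * expIChar (ξ ⬝ᵥ v) t := by
    refine Finset.sum_congr rfl fun ξ _ ↦ ?_
    rw [expIChar_apply, dotProduct_add, dotProduct_smul, smul_eq_mul, mul_assoc,
      ← Complex.exp_add]
    push_cast
    ring_nf
  simp only [mem_ofPred_eq, hline] at hx₀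
  intro ξ hξ
  simpa using eq_zero_of_measure_setOf_sum_expIChar_eq_zero_pos hv (pos_iff_ne_zero.2 hx₀) ξ hξ

theorem statement13_general (d : ℕ) (V : (Fin d → ℝ) → ℝ)
    (hVnonneg : ∀ x, 0 ≤ V x)
    (hVpos : 0 < volume {x : Fin d → ℝ | V x ≠ 0})
    (M : Finset (Fin d → ℝ)) (hM : M.Nonempty)
    (c : (Fin d → ℝ) → ℂ) (hc : ∀ ξ ∈ M, c ξ ≠ 0) :
    ¬ ((fun x : Fin d → ℝ =>
          (Real.sqrt (V x) : ℂ) *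
            ∑ ξ ∈ M, c ξ * Complex.exp (Complex.I * ((∑ k, ξ k * x k : ℝ) : ℂ)))
        =ᵐ[volume] 0) := by
  intro h
  set f : (Fin d → ℝ) → ℂ := fun x ↦ ∑ ξ ∈ M, c ξ * cexp (I * ↑(ξ ⬝ᵥ x))
  have hcover : {x | V x ≠ 0} ⊆ {x | f x = 0} ∪ {x | ¬(√(V x) : ℂ) * f x = 0} := by
    intro x hVx
    by_cases hfx : f x = 0
    · exact Or.inl hfx
    · refine Or.inr (mul_ne_zero ?_ hfx)
      exact_mod_cast (Real.sqrt_pos.2 ((hVnonneg x).lt_of_ne' hVx)).ne'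
  have hzero_set : 0 < volume {x | f x = 0} := by
    contrapose! hVpos
    exact (measure_mono_null hcover
      (measure_union_null (nonpos_iff_eq_zero.1 hVpos) (ae_iff.1 h))).le
  obtain ⟨ξ, hξ⟩ := hM
  exact hc ξ hξ (eq_zero_of_measure_setOf_sum_exp_dotProduct_eq_zero_pos hzero_set ξ hξ)

/-- Let `V : ℝᵈ → [0,∞)` be bounded, measurable, compactly supported, with
`{V ≠ 0}` of positive Lebesgue measure. Then the family `x ↦ √V(x) e^{iξ·x}` (`ξ ∈ ℝᵈ`) is
linearly independent in `L²`: for every finite nonempty `M ⊆ ℝᵈ` and nonzero coefficients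
`c_ξ`, the function `x ↦ √V(x) ∑_{ξ∈M} c_ξ e^{iξ·x}` is not the zero element of `L²`,
i.e. it is not a.e. equal to `0`. -/
theorem statement13 (d : ℕ) (hd : 1 ≤ d) (V : (Fin d → ℝ) → ℝ)
    (hVmeas : Measurable V) (hVbdd : ∃ C : ℝ, ∀ x, V x ≤ C) (hVnonneg : ∀ x, 0 ≤ V x)
    (hVsupp : HasCompactSupport V)
    (hVpos : 0 < volume {x : Fin d → ℝ | V x ≠ 0})
    (M : Finset (Fin d → ℝ)) (hM : M.Nonempty)
    (c : (Fin d → ℝ) → ℂ) (hc : ∀ ξ ∈ M, c ξ ≠ 0) :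
    ¬ ((fun x : Fin d → ℝ =>
          (Real.sqrt (V x) : ℂ) *
            ∑ ξ ∈ M, c ξ * Complex.exp (Complex.I * ((∑ k, ξ k * x k : ℝ) : ℂ)))
        =ᵐ[volume] 0) :=
  statement13_general d V hVnonneg hVpos M hM c hc
end

section
/- Let d ≥ 1 be an integer, g : ℝ^d → ℂ a continuous function, and E > 0. Then lim_{ε↓0} (1/(2ε)) ∫_{{k ∈ ℝ^d : E−ε < |k|² < E+ε}} g(k) dk = (E^{d/2−1} / 2) · ∫_{S^{d−1}} g(√E · ξ) dS(ξ), where dk is Lebesgue measure on ℝ^d, |k| the Euclidean norm, and dS the surface measure on the unit sphere S^{d−1}. -/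
/-!
In polar coordinates the shell integral equals `G (E + ε) - G (E - ε)`, where
`G t = ∫ r in 0..√t, r ^ (d - 1) • Φ r` and `Φ r = ∫_{S^{d-1}} g (r • ξ) dS(ξ)` is continuous
in `r`. The limit is therefore the symmetric derivative of `G` at `E`, which by the fundamental
theorem of calculus and the chain rule is
`√E ^ (d - 1) • Φ √E / (2 * √E) = E ^ (d / 2 - 1) / 2 • Φ √E`.
-/

open MeasureTheory Set Metric Filter Topology

section Polar

variable {E F : Type*} [NormedAddCommGroup E] [NormedSpace ℝ E] [FiniteDimensional ℝ E]
  [MeasurableSpace E] [BorelSpace E] [NormedAddCommGroup F] [NormedSpace ℝ F]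

theorem continuous_integral_toSphere_smul (μ : Measure E) [μ.IsAddHaarMeasure] {f : E → F}
    (hf : Continuous f) :
    Continuous fun r : ℝ => ∫ ξ, f (r • (ξ : E)) ∂μ.toSphere := by
  simpa using continuous_parametric_integral_of_continuous (μ := μ.toSphere)
    (f := fun (r : ℝ) (ξ : sphere (0 : E) 1) => f (r • (ξ : E))) (by fun_prop) isCompact_univ

theorem MeasureTheory.Measure.integral_volumeIoiPow (n : ℕ) (φ : ℝ → F) :
    ∫ r, φ r ∂Measure.volumeIoiPow n = ∫ r in Ioi (0 : ℝ), r ^ n • φ r := by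
  rw [Measure.volumeIoiPow, integral_withDensity_eq_integral_toReal_smul (by fun_prop)
    (.of_forall fun _ => ENNReal.ofReal_lt_top), ← integral_subtype_comap measurableSet_Ioi]
  refine integral_congr_ae (.of_forall fun r => ?_)
  simp only [ENNReal.toReal_ofReal (pow_nonneg r.2.out.le n)]

theorem integral_eq_integral_Ioi_smul_integral_toSphere [Nontrivial E] (μ : Measure E)
    [μ.IsAddHaarMeasure] {f : E → F} (hf : Integrable f μ) :
    ∫ x, f x ∂μ =
      ∫ r in Ioi (0 : ℝ), r ^ (Module.finrank ℝ E - 1) • ∫ ξ, f (r • (ξ : E)) ∂μ.toSphere := by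
  set e := homeomorphUnitSphereProd E
  have hmp := μ.measurePreserving_homeomorphUnitSphereProd
  set φ : sphere (0 : E) 1 × Ioi (0 : ℝ) → F := fun p => f (p.2.1 • p.1.1)
  have hφ : ∀ x, φ (e x) = f x := fun x => by
    simp [φ, e, smul_inv_smul₀ (norm_ne_zero_iff.2 x.2)]
  have hcompl : MeasurableSet ({0}ᶜ : Set E) := (measurableSet_singleton 0).compl
  have hint : Integrable φ (μ.toSphere.prod (Measure.volumeIoiPow (Module.finrank ℝ E - 1))) := by
    rw [← hmp.integrable_comp_emb e.measurableEmbedding,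
      show φ ∘ e = f ∘ Subtype.val from funext hφ]
    exact (integrableOn_iff_comap_subtypeVal hcompl).1 hf.integrableOn
  calc ∫ x, f x ∂μ = ∫ x in ({0}ᶜ : Set E), f x ∂μ := by rw [restrict_compl_singleton]
    _ = ∫ x : ({0}ᶜ : Set E), φ (e x) ∂μ.comap Subtype.val := by
      simp_rw [hφ]; exact (integral_subtype_comap hcompl f).symm
    _ = ∫ p, φ p ∂μ.toSphere.prod (Measure.volumeIoiPow (Module.finrank ℝ E - 1)) :=
      hmp.integral_comp e.measurableEmbedding φ
    _ = _ := by
      rw [integral_prod_symm φ hint]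
      exact Measure.integral_volumeIoiPow _ fun r => ∫ ξ, f (r • (ξ : E)) ∂μ.toSphere

theorem setIntegral_preimage_norm_eq [Nontrivial E] (μ : Measure E) [μ.IsAddHaarMeasure]
    {T : Set ℝ} (hT : MeasurableSet T) (hT₀ : T ⊆ Ioi 0) {f : E → F}
    (hf : IntegrableOn f ((‖·‖) ⁻¹' T) μ) :
    ∫ x in (‖·‖) ⁻¹' T, f x ∂μ =
      ∫ r in T, r ^ (Module.finrank ℝ E - 1) • ∫ ξ, f (r • (ξ : E)) ∂μ.toSphere := by
  have hS : MeasurableSet ((‖·‖) ⁻¹' T : Set E) := measurable_norm hT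
  rw [← integral_indicator hS, integral_eq_integral_Ioi_smul_integral_toSphere μ
    (hf.integrable_indicator hS), ← inter_eq_right.2 hT₀, ← setIntegral_indicator hT]
  refine setIntegral_congr_fun measurableSet_Ioi fun r (hr : 0 < r) => ?_
  have hnorm : ∀ ξ : sphere (0 : E) 1, ‖r • (ξ : E)‖ = r := fun ξ => by
    rw [norm_smul, norm_eq_of_mem_sphere ξ, mul_one, Real.norm_of_nonneg hr.le]
  by_cases hrT : r ∈ T <;> simp [indicator, hnorm, hrT, hr]

theorem setOf_sq_norm_mem_Ioo {V : Type*} [SeminormedAddCommGroup V] {a b : ℝ} (ha : 0 ≤ a) :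
    {k : V | a < ‖k‖ ^ 2 ∧ ‖k‖ ^ 2 < b} = (‖·‖) ⁻¹' Ioo √a √b := by
  ext k
  rw [mem_ofPred_eq, mem_preimage, mem_Ioo, ← Real.sqrt_sq (norm_nonneg k),
    Real.sqrt_lt_sqrt_iff ha, Real.sqrt_lt_sqrt_iff (by positivity), Real.sqrt_sq (norm_nonneg k)]

theorem setIntegral_sq_norm_mem_Ioo [Nontrivial E] (μ : Measure E) [μ.IsAddHaarMeasure]
    {f : E → F} (hf : Continuous f) {a b : ℝ} (ha : 0 ≤ a) (hab : a ≤ b) :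
    ∫ x in {x : E | a < ‖x‖ ^ 2 ∧ ‖x‖ ^ 2 < b}, f x ∂μ =
      ∫ r in √a..√b, r ^ (Module.finrank ℝ E - 1) • ∫ ξ, f (r • (ξ : E)) ∂μ.toSphere := by
  have hIoo : Ioo √a √b ⊆ Ioi 0 := fun r hr => (Real.sqrt_nonneg a).trans_lt hr.1
  have hf' : IntegrableOn f ((‖·‖) ⁻¹' Ioo √a √b) μ :=
    (hf.continuousOn.integrableOn_compact (isCompact_closedBall 0 √b)).mono_set
      fun x hx => mem_closedBall_zero_iff.2 hx.2.le
  rw [setOf_sq_norm_mem_Ioo ha, setIntegral_preimage_norm_eq μ measurableSet_Ioo hIoo hf',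
    intervalIntegral.integral_of_le (Real.sqrt_le_sqrt hab), integral_Ioc_eq_integral_Ioo]

end Polar

theorem HasDerivAt.tendsto_symmetric_slope_zero {F : Type*} [NormedAddCommGroup F]
    [NormedSpace ℝ F] {f : ℝ → F} {f' : F} {x : ℝ} (hf : HasDerivAt f f' x) :
    Tendsto (fun t => (2 * t)⁻¹ • (f (x + t) - f (x - t))) (𝓝[≠] 0) (𝓝 f') := by
  have hφ : HasDerivAt (fun t => f (x + t) - f (x - t)) ((2 : ℝ) • f') 0 := by
    have hright := HasDerivAt.comp_const_add x 0 (by simpa using hf)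
    have hleft := HasDerivAt.comp_const_sub x 0 (by simpa using hf)
    rw [two_smul, ← sub_neg_eq_add]
    exact hright.sub hleft
  have := hφ.tendsto_slope_zero.const_smul (2⁻¹ : ℝ)
  simpa [smul_smul, mul_inv, mul_comm] using this

theorem Real.one_div_two_mul_sqrt_mul_sqrt_pow_sub_one {x : ℝ} (hx : 0 < x) {d : ℕ} (hd : 1 ≤ d) :
    1 / (2 * √x) * √x ^ (d - 1) = x ^ ((d : ℝ) / 2 - 1) / 2 := by
  rw [Real.sqrt_eq_rpow, ← Real.rpow_natCast, ← Real.rpow_mul hx.le, Nat.cast_sub hd,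
    one_div, mul_inv, mul_assoc, ← Real.rpow_neg hx.le, ← Real.rpow_add hx]
  ring_nf

/-- For continuous `g : ℝᵈ → ℂ` and `E > 0`,
`(1/(2ε)) ∫_{E−ε<|k|²<E+ε} g(k) dk → (E^{d/2−1}/2) ∫_{S^{d−1}} g(√E ξ) dS(ξ)` as `ε ↓ 0`,
where `dS` is the surface measure on the unit sphere (realized as `volume.toSphere`). -/
theorem statement16 (d : ℕ) (hd : 1 ≤ d) (g : EuclideanSpace ℝ (Fin d) → ℂ)
    (hg : Continuous g) (E : ℝ) (hE : 0 < E) :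
    Filter.Tendsto
      (fun ε : ℝ => (1 / (2 * ε)) •
        ∫ k in {k : EuclideanSpace ℝ (Fin d) | E - ε < ‖k‖ ^ 2 ∧ ‖k‖ ^ 2 < E + ε}, g k)
      (nhdsWithin 0 (Set.Ioi 0))
      (nhds ((E ^ ((d : ℝ) / 2 - 1) / 2) •
        ∫ ξ : Metric.sphere (0 : EuclideanSpace ℝ (Fin d)) 1,
          g (Real.sqrt E • (ξ : EuclideanSpace ℝ (Fin d)))
          ∂((volume : Measure (EuclideanSpace ℝ (Fin d))).toSphere))) := by
  have : Nontrivial (EuclideanSpace ℝ (Fin d)) :=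
    Module.nontrivial_of_finrank_pos (R := ℝ) (by rw [finrank_euclideanSpace_fin]; omega)
  set h : ℝ → ℂ := fun r => r ^ (d - 1) • ∫ ξ, g (r • (ξ : EuclideanSpace ℝ (Fin d)))
    ∂(volume : Measure (EuclideanSpace ℝ (Fin d))).toSphere
  have hh : Continuous h := (continuous_pow _).smul (continuous_integral_toSphere_smul _ hg)
  set G : ℝ → ℂ := fun t => ∫ r in 0..√t, h r
  have hG : HasDerivAt G ((1 / (2 * √E)) • h √E) E :=
    (hh.integral_hasStrictDerivAt 0 _).hasDerivAt.scomp E (Real.hasDerivAt_sqrt hE.ne')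
  have hshell : ∀ ε ∈ Ioo 0 E,
      ∫ k in {k : EuclideanSpace ℝ (Fin d) | E - ε < ‖k‖ ^ 2 ∧ ‖k‖ ^ 2 < E + ε}, g k =
        G (E + ε) - G (E - ε) := fun ε hε => by
    rw [setIntegral_sq_norm_mem_Ioo _ hg (by linarith [hε.2]) (by linarith [hε.1]),
      finrank_euclideanSpace_fin, intervalIntegral.integral_interval_sub_left
        (hh.intervalIntegrable _ _) (hh.intervalIntegrable _ _)]
  have hG' : (1 / (2 * √E)) • h √E = (E ^ ((d : ℝ) / 2 - 1) / 2) •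
      ∫ ξ, g (√E • (ξ : EuclideanSpace ℝ (Fin d)))
        ∂(volume : Measure (EuclideanSpace ℝ (Fin d))).toSphere := by
    rw [smul_smul, Real.one_div_two_mul_sqrt_mul_sqrt_pow_sub_one hE hd]
  rw [← hG']
  refine (hG.tendsto_symmetric_slope_zero.mono_left (nhdsGT_le_nhdsNE 0)).congr' ?_
  filter_upwards [Ioo_mem_nhdsGT hE] with ε hε
  rw [hshell ε hε, one_div]
end
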